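/- (Limiting Geometry) Let G = (Q, δ, π̃) be a strongly connected PFSA over Σ with distinguishable states and stationary distribution ℘_λ. Regard probability vectors on Σ as points of ℝ^Σ and let D_∞ = {℘_x Π̃ : x ∈ Σ*, Pr(x) > 0}, where (℘Π̃)_σ = ∑_q ℘(q)π̃(q,σ). Then the closure of the convex hull of D_∞ equals the convex hull of the finite set {π̃(q,·) : q ∈ Q}; in particular, every extreme point u of the closed convex hull of D_∞ satisfies u = π̃(q,·) for some q ∈ Q. -/

import Mathlib

open MeasureTheory Filter

/-- Cylinder set `xΣ^ω` of a finite word `x`: infinite sequences beginning with `x`. -/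
def Cylinder {A : Type*} (x : List A) : Set (ℕ → A) :=
  {ω | ∀ i : Fin x.length, ω i = x.get i}

/-- The σ-algebra `B` on `Σ^ω` generated by the cylinder sets. -/
def CylSigma (A : Type*) : MeasurableSpace (ℕ → A) :=
  MeasurableSpace.generateFrom (Set.range (Cylinder (A := A)))

/-- A probabilistic finite-state automaton over a finite alphabet `S`. -/
structure PFSA (Q S : Type*) [Fintype S] where
  δ : Q → S → Q
  π : Q → S → ℝ
  π_nonneg : ∀ q σ, 0 ≤ π q σ
  π_sum : ∀ q, ∑ σ, π q σ = 1

namespace PFSA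

variable {Q S : Type*} [Fintype S]

/-- Extension of the transition map to finite words. -/
def δs (G : PFSA Q S) : Q → List S → Q
  | q, [] => q
  | q, σ :: x => G.δs (G.δ q σ) x

/-- Extension of the symbol-generation probabilities to finite words. -/
def πs (G : PFSA Q S) : Q → List S → ℝ
  | _, [] => 1
  | q, σ :: x => G.π q σ * G.πs (G.δ q σ) x

/-- `G` is strongly connected. -/
def StronglyConnected (G : PFSA Q S) : Prop :=
  ∀ q q' : Q, ∃ x : List S, G.δs q x = q' ∧ 0 < G.πs q x

/-- `G` has distinguishable states. -/
def Distinguishable (G : PFSA Q S) : Prop :=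
  ∀ q q' : Q, q ≠ q' → ∃ x : List S, G.πs q x ≠ G.πs q' x

variable [Fintype Q] [DecidableEq Q]

/-- The transition matrix `M` of the Markov chain induced by `G`. -/
def M (G : PFSA Q S) : Matrix Q Q ℝ :=
  fun q q' => ∑ σ, if G.δ q σ = q' then G.π q σ else 0

/-- `p` is a stationary distribution of `G`: a probability vector with `p M = p`. -/
def IsStationary (G : PFSA Q S) (p : Q → ℝ) : Prop :=
  (∀ q, 0 ≤ p q) ∧ (∑ q, p q = 1) ∧ ∀ q', ∑ q, p q * G.M q q' = p q'

/-- Symbol-specific transformation matrix `Γ_σ`. -/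
def Γ (G : PFSA Q S) (σ : S) : Matrix Q Q ℝ :=
  fun q q' => if G.δ q σ = q' then G.π q σ else 0

/-- Product of transformation matrices along a word: `Γ_{σ₁}⋯Γ_{σ_m}`. -/
def Γs (G : PFSA Q S) (x : List S) : Matrix Q Q ℝ := (x.map G.Γ).prod

/-- The (unnormalized) row vector `p Γ_{σ₁}⋯Γ_{σ_m}`. -/
def wvec (G : PFSA Q S) (p : Q → ℝ) (x : List S) : Q → ℝ :=
  Matrix.vecMul p (G.Γs x)

/-- `Pr(x) = ‖p Γ_{σ₁}⋯Γ_{σ_m}‖₁` (for a nonnegative vector `p`). -/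
def PrW (G : PFSA Q S) (p : Q → ℝ) (x : List S) : ℝ :=
  ∑ q, G.wvec p x q

/-- `℘_x`: the ℓ1-normalization of `p Γ_{σ₁}⋯Γ_{σ_m}`. -/
noncomputable def wdist (G : PFSA Q S) (p : Q → ℝ) (x : List S) : Q → ℝ :=
  fun q => G.wvec p x q / G.PrW p x

end PFSA

/-- The point-mass probability vector `e_q` at `q`. -/
def eVec {Q : Type*} [DecidableEq Q] (q : Q) : Q → ℝ := fun q' => if q' = q then 1 else 0

/-- The ℓ∞ norm of a finitely indexed vector. -/
noncomputable def linf {ι : Type*} [Fintype ι] (v : ι → ℝ) : ℝ := ⨆ i, |v i|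

/-- `x` is an `ε`-synchronizing word for `G` with stationary distribution `p`. -/
noncomputable def EpsSync {Q S : Type*} [Fintype S] [Fintype Q] [DecidableEq Q]
    (G : PFSA Q S) (p : Q → ℝ) (ε : ℝ) (x : List S) : Prop :=
  0 < G.PrW p x ∧ ∃ q : Q, linf (fun q' => G.wdist p x q' - eVec q q') ≤ ε

/-- `p` is a probability vector. -/
def IsProbVec {ι : Type*} [Fintype ι] (p : ι → ℝ) : Prop :=
  (∀ i, 0 ≤ p i) ∧ ∑ i, p i = 1

/-- Entropy (base 2) of a finitely supported vector (`0 log 0 = 0`). -/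
noncomputable def entropy2 {ι : Type*} [Fintype ι] (p : ι → ℝ) : ℝ :=
  -∑ i, p i * Real.logb 2 (p i)

/-- The generalized binary entropy function `B(ε,k)` (for `ε ∈ (0,1/2]`). -/
noncomputable def Bdev (ε : ℝ) (k : ℕ) : ℝ :=
  ε * Real.logb 2 (((k : ℝ) - 1) / ε) + (1 - ε) * Real.logb 2 (1 / (1 - ε))

/-- Number of (possibly overlapping) occurrences of `x` as a contiguous substring of `s`. -/
def countOcc {A : Type*} [DecidableEq A] (s x : List A) : ℕ :=
  ((List.range s.length).filter fun i => decide ((s.drop i).take x.length = x)).length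

/-- Total count `∑_{σ∈Σ} #^s(xσ)`. -/
def totCount {A : Type*} [Fintype A] [DecidableEq A] (s x : List A) : ℕ :=
  ∑ σ : A, countOcc s (x ++ [σ])

/-- The empirical symbolic derivative `φ^s(x)`. -/
noncomputable def phi {A : Type*} [Fintype A] [DecidableEq A] (s x : List A) : A → ℝ :=
  fun σ => (countOcc s (x ++ [σ]) : ℝ) / (totCount s x : ℝ)

/-- The length-`n` prefix `ω↾n` of an infinite sequence `ω`. -/
def pre {A : Type*} (ω : ℕ → A) (n : ℕ) : List A := (List.range n).map ω

/-!
Each `℘_x Π̃` is the `℘_x`-weighted average of the rows `π̃(q,·)`, and the convex hull of finitely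
many points is closed; this gives `⊆`. For `⊇` it suffices that every row `π̃(q,·)` is a limit of
points of `D_∞`, i.e. that for each `q` and `c > 0` some word `x` has `℘_x(q) ≥ 1 - c`; by strong
connectivity it is enough to find words after which almost all mass sits on a single state.

For this, weigh the initial states by `w_y(q) = ℘(q) π̃(q,y)` and take the energy
`Φ(y) = ∑_q w_y(q)² / Pr(y)`. Over all words of a given length the energies sum to at most `1`,
and the energy gained by extending `y` by all blocks of `L` letters is a sum of Cauchy–Schwarz
defects, one per initial state. Hence some `y` gains at most `ε Pr(y)`; for such `y` the law of
the next `L` letters seen from the current state `δ(q,y)` is `ℓ¹`-close to the overall law for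
every initial state `q` of posterior weight at least `η`. Choosing `L` so that distinct states
have `ℓ¹`-separated laws on words of length `L` (distinguishability), all these heavy initial
states lead to the same state after `y`, which therefore carries all but `|Q| η` of the mass.
-/

open Finset

section WordSums

variable {S M : Type*} [Fintype S] [AddCommMonoid M]

theorem sum_ofFn_append {n m : ℕ} (F : List S → M) :
    ∑ f : Fin (n + m) → S, F (List.ofFn f) =
      ∑ g : Fin n → S, ∑ h : Fin m → S, F (List.ofFn g ++ List.ofFn h) := by
  rw [← (Fin.appendEquiv n m).sum_comp, Fintype.sum_prod_type]
  simp [Fin.appendEquiv, List.ofFn_fin_append]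

theorem sum_ofFn_succ {n : ℕ} (F : List S → M) :
    ∑ f : Fin (n + 1) → S, F (List.ofFn f) = ∑ σ, ∑ g : Fin n → S, F (σ :: List.ofFn g) := by
  rw [← (Fin.consEquiv fun _ => S).sum_comp, Fintype.sum_prod_type]
  simp [Fin.consEquiv, List.ofFn_succ]

end WordSums

theorem exists_pos_forall_le_of_finite {α : Type*} [Finite α] {f : α → ℝ}
    (hf : ∀ a, 0 < f a) : ∃ γ > 0, ∀ a, γ ≤ f a := by
  cases isEmpty_or_nonempty α
  · exact ⟨1, one_pos, isEmptyElim⟩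
  · obtain ⟨a₀, ha₀⟩ := Finite.exists_min f
    exact ⟨f a₀, hf a₀, ha₀⟩

theorem sq_sum_abs_mul_sub_mul_le {ι : Type*} [Fintype ι] (a b : ι → ℝ) (hb : ∀ i, 0 ≤ b i)
    (hab : ∀ i, b i = 0 → a i = 0) (hB : 0 < ∑ i, b i) :
    (∑ i, |a i * ∑ j, b j - b i * ∑ j, a j|) ^ 2 ≤
      (∑ i, b i) ^ 3 * (∑ i, a i ^ 2 / b i - (∑ i, a i) ^ 2 / ∑ i, b i) := by
  set A := ∑ i, a i
  set B := ∑ i, b i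
  have hterm : ∀ i, (a i * B - b i * A) ^ 2 / b i =
      B ^ 2 * (a i ^ 2 / b i) - 2 * A * B * a i + A ^ 2 * b i := by
    intro i
    rcases (hb i).eq_or_lt with h | h
    · simp [← h, hab i h.symm]
    · field_simp
      ring
  calc (∑ i, |a i * B - b i * A|) ^ 2 ≤ (∑ i, (a i * B - b i * A) ^ 2 / b i) * B := by
        refine sum_sq_le_sum_mul_sum_of_sq_le_mul _ (fun i _ => div_nonneg (sq_nonneg _) (hb i))
          (fun i _ => hb i) fun i _ => ?_
        rcases (hb i).eq_or_lt with h | h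
        · simp [← h, hab i h.symm]
        · rw [sq_abs, div_mul_cancel₀ _ h.ne']
    _ = B ^ 3 * (∑ i, a i ^ 2 / b i - A ^ 2 / B) := by
        simp only [hterm, sum_add_distrib, sum_sub_distrib, ← mul_sum]
        field_simp
        ring

theorem abs_sub_sum_mul_le {ι : Type*} [Fintype ι] [DecidableEq ι] {b v : ι → ℝ}
    (hb0 : ∀ i, 0 ≤ b i) (hb1 : ∑ i, b i = 1) (hv0 : ∀ i, 0 ≤ v i) (hv1 : ∀ i, v i ≤ 1)
    (i : ι) : |v i - ∑ j, b j * v j| ≤ 1 - b i := by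
  rw [← add_sum_erase _ _ (mem_univ i)]
  rw [← add_sum_erase _ _ (mem_univ i)] at hb1
  have hrest : ∑ j ∈ univ.erase i, b j * v j ≤ ∑ j ∈ univ.erase i, b j :=
    sum_le_sum fun j _ => mul_le_of_le_one_right (hb0 j) (hv1 j)
  have hrest0 : 0 ≤ ∑ j ∈ univ.erase i, b j * v j :=
    sum_nonneg fun j _ => mul_nonneg (hb0 j) (hv0 j)
  rw [abs_le]
  constructor <;> nlinarith [hv0 i, hv1 i, hb0 i]

theorem sum_mul_mem_convexHull_range {ι S : Type*} [Fintype ι] {b : ι → ℝ} (hb0 : ∀ i, 0 ≤ b i)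
    (hb1 : ∑ i, b i = 1) (v : ι → S → ℝ) :
    (fun σ => ∑ i, b i * v i σ) ∈ convexHull ℝ (Set.range v) := by
  have hmix : (fun σ => ∑ i, b i * v i σ) = ∑ i, b i • v i := by
    funext σ
    simp [Finset.sum_apply]
  rw [hmix]
  exact (convex_convexHull ℝ _).sum_mem (fun i _ => hb0 i) hb1
    fun i _ => subset_convexHull ℝ _ ⟨i, rfl⟩

namespace PFSA

section Words

variable {Q S : Type*} [Fintype S] (G : PFSA Q S)

theorem π_le_one (q : Q) (σ : S) : G.π q σ ≤ 1 :=
  G.π_sum q ▸ single_le_sum (fun σ _ => G.π_nonneg q σ) (mem_univ σ)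

theorem πs_nonneg (q : Q) (x : List S) : 0 ≤ G.πs q x := by
  induction x generalizing q with
  | nil => exact zero_le_one
  | cons σ x ih => exact mul_nonneg (G.π_nonneg q σ) (ih _)

theorem πs_le_one (q : Q) (x : List S) : G.πs q x ≤ 1 := by
  induction x generalizing q with
  | nil => exact le_rfl
  | cons σ x ih => exact mul_le_one₀ (G.π_le_one q σ) (G.πs_nonneg _ x) (ih _)

theorem δs_append (q : Q) (x y : List S) : G.δs q (x ++ y) = G.δs (G.δs q x) y := by
  induction x generalizing q with
  | nil => rfl
  | cons σ x ih => exact ih _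

theorem πs_append (q : Q) (x y : List S) :
    G.πs q (x ++ y) = G.πs q x * G.πs (G.δs q x) y := by
  induction x generalizing q with
  | nil => simp [πs, δs]
  | cons σ x ih => simp [πs, δs, ih, mul_assoc]

theorem sum_πs_ofFn (q : Q) (n : ℕ) : ∑ f : Fin n → S, G.πs q (List.ofFn f) = 1 := by
  induction n generalizing q with
  | zero => simp [πs]
  | succ n ih => simp only [sum_ofFn_succ, πs, ← mul_sum, ih, mul_one, G.π_sum]

theorem sum_πs_append_ofFn (q : Q) (x : List S) (n : ℕ) :
    ∑ h : Fin n → S, G.πs q (x ++ List.ofFn h) = G.πs q x := by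
  simp [πs_append, ← mul_sum, sum_πs_ofFn]

noncomputable def l1Dist (n : ℕ) (r r' : Q) : ℝ :=
  ∑ h : Fin n → S, |G.πs r (List.ofFn h) - G.πs r' (List.ofFn h)|

theorem abs_πs_sub_le_l1Dist (r r' : Q) (x : List S) (m : ℕ) :
    |G.πs r x - G.πs r' x| ≤ G.l1Dist (x.length + m) r r' := by
  set T : (Fin x.length → S) → ℝ := fun g => ∑ h : Fin m → S,
    |G.πs r (List.ofFn g ++ List.ofFn h) - G.πs r' (List.ofFn g ++ List.ofFn h)|
  calc |G.πs r x - G.πs r' x|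
      = |∑ h : Fin m → S, (G.πs r (x ++ List.ofFn h) - G.πs r' (x ++ List.ofFn h))| := by
        rw [sum_sub_distrib, sum_πs_append_ofFn, sum_πs_append_ofFn]
    _ ≤ T x.get := by
        simpa only [T, List.ofFn_get] using abs_sum_le_sum_abs _ _
    _ ≤ ∑ g, T g :=
        single_le_sum (f := T) (fun g _ => sum_nonneg fun _ _ => abs_nonneg _) (mem_univ _)
    _ = G.l1Dist (x.length + m) r r' := by
        rw [l1Dist, sum_ofFn_append (F := fun y => |G.πs r y - G.πs r' y|)]

theorem Distinguishable.exists_le_l1Dist [Finite Q] {G : PFSA Q S} (hG : G.Distinguishable) :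
    ∃ L, ∃ γ > 0, ∀ r r', r ≠ r' → γ ≤ G.l1Dist L r r' := by
  choose w hw using fun p : {p : Q × Q // p.1 ≠ p.2} => hG _ _ p.2
  obtain ⟨L, hL⟩ := (Set.finite_range fun p => (w p).length).bddAbove
  have hpos : ∀ p : {p : Q × Q // p.1 ≠ p.2}, 0 < G.l1Dist L p.1.1 p.1.2 := fun p => by
    obtain ⟨m, hm⟩ := Nat.exists_eq_add_of_le (hL ⟨p, rfl⟩)
    rw [hm]
    exact (abs_pos.2 (sub_ne_zero.2 (hw p))).trans_le (G.abs_πs_sub_le_l1Dist _ _ _ _)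
  obtain ⟨γ, hγ, hle⟩ := exists_pos_forall_le_of_finite hpos
  exact ⟨L, γ, hγ, fun r r' h => hle ⟨(r, r'), h⟩⟩

end Words

section Prior

variable {Q S : Type*} [Fintype S] [Fintype Q] [DecidableEq Q] (G : PFSA Q S) {p : Q → ℝ}

theorem Γs_apply (x : List S) (q q' : Q) :
    G.Γs x q q' = if G.δs q x = q' then G.πs q x else 0 := by
  induction x generalizing q with
  | nil => simp [Γs, δs, πs, Matrix.one_apply, eq_comm]
  | cons σ x ih =>
    rw [Γs, List.map_cons, List.prod_cons, ← Γs, Matrix.mul_apply]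
    simp only [Γ, ite_mul, zero_mul, sum_ite_eq, mem_univ, if_true, ih]
    simp only [δs, πs, mul_ite, mul_zero]
    rfl

theorem wvec_apply (p : Q → ℝ) (x : List S) (q' : Q) :
    G.wvec p x q' = ∑ q with G.δs q x = q', p q * G.πs q x := by
  simp [wvec, Matrix.vecMul, dotProduct, Γs_apply, sum_filter]

theorem PrW_eq_sum (p : Q → ℝ) (x : List S) : G.PrW p x = ∑ q, p q * G.πs q x := by
  simp only [PrW, wvec_apply, sum_fiberwise]

theorem PrW_sub_wvec (p : Q → ℝ) (x : List S) (q' : Q) :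
    G.PrW p x - G.wvec p x q' = ∑ q with G.δs q x ≠ q', p q * G.πs q x := by
  rw [PrW_eq_sum, wvec_apply, ← sum_filter_add_sum_filter_not univ (fun q => G.δs q x = q'),
    add_sub_cancel_left]

theorem wvec_nonneg (hp : ∀ q, 0 ≤ p q) (x : List S) (q' : Q) : 0 ≤ G.wvec p x q' := by
  rw [wvec_apply]
  exact sum_nonneg fun q _ => mul_nonneg (hp q) (G.πs_nonneg q x)

theorem wvec_le_PrW (hp : ∀ q, 0 ≤ p q) (x : List S) (q' : Q) : G.wvec p x q' ≤ G.PrW p x :=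
  single_le_sum (fun q _ => G.wvec_nonneg hp x q) (mem_univ q')

theorem PrW_nonneg (hp : ∀ q, 0 ≤ p q) (x : List S) : 0 ≤ G.PrW p x :=
  sum_nonneg fun q _ => G.wvec_nonneg hp x q

theorem mul_πs_le_PrW (hp : ∀ q, 0 ≤ p q) (x : List S) (q : Q) : p q * G.πs q x ≤ G.PrW p x :=
  G.PrW_eq_sum p x ▸ single_le_sum (fun q _ => mul_nonneg (hp q) (G.πs_nonneg q x)) (mem_univ q)

theorem sum_PrW_append_ofFn (y : List S) (n : ℕ) :
    ∑ h : Fin n → S, G.PrW p (y ++ List.ofFn h) = G.PrW p y := by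
  simp only [PrW_eq_sum]
  rw [sum_comm]
  simp [← mul_sum, sum_πs_append_ofFn]

theorem sum_PrW_ofFn (hp1 : ∑ q, p q = 1) (n : ℕ) :
    ∑ f : Fin n → S, G.PrW p (List.ofFn f) = 1 := by
  simpa [PrW_eq_sum, πs, hp1] using G.sum_PrW_append_ofFn (p := p) [] n

theorem wdist_nonneg (hp : ∀ q, 0 ≤ p q) (x : List S) (q : Q) : 0 ≤ G.wdist p x q :=
  div_nonneg (G.wvec_nonneg hp x q) (G.PrW_nonneg hp x)

theorem sum_wdist {x : List S} (hx : 0 < G.PrW p x) : ∑ q, G.wdist p x q = 1 := by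
  simp only [wdist, ← sum_div]
  exact div_self hx.ne'

noncomputable def energy (p : Q → ℝ) (y : List S) : ℝ :=
  ∑ q, (p q * G.πs q y) ^ 2 / G.PrW p y

noncomputable def energyGain (p : Q → ℝ) (L : ℕ) (y : List S) : ℝ :=
  ∑ h : Fin L → S, G.energy p (y ++ List.ofFn h) - G.energy p y

theorem energy_nonneg (hp : ∀ q, 0 ≤ p q) (y : List S) : 0 ≤ G.energy p y :=
  sum_nonneg fun _ _ => div_nonneg (sq_nonneg _) (G.PrW_nonneg hp y)

theorem energy_le_PrW (hp : ∀ q, 0 ≤ p q) (y : List S) : G.energy p y ≤ G.PrW p y := by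
  rw [energy, G.PrW_eq_sum p y]
  refine sum_le_sum fun q _ => ?_
  rw [← G.PrW_eq_sum p y]
  have hw := mul_nonneg (hp q) (G.πs_nonneg q y)
  rcases (G.PrW_nonneg hp y).eq_or_lt with h | h
  · simpa [← h] using hw
  · rw [div_le_iff₀ h, sq]
    exact mul_le_mul_of_nonneg_left (G.mul_πs_le_PrW hp y q) hw

theorem exists_energyGain_le (hp : ∀ q, 0 ≤ p q) (hp1 : ∑ q, p q = 1) (L : ℕ) {ε : ℝ}
    (hε : 0 < ε) : ∃ y, 0 < G.PrW p y ∧ G.energyGain p L y ≤ ε * G.PrW p y := by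
  by_contra! h
  have hgain : ∀ y, ε * G.PrW p y ≤ G.energyGain p L y := fun y => by
    rcases (G.PrW_nonneg hp y).eq_or_lt with h0 | hpos
    · have hy : G.energy p y = 0 := by simp [energy, ← h0]
      rw [energyGain, hy, sub_zero, ← h0, mul_zero]
      exact sum_nonneg fun _ _ => G.energy_nonneg hp _
    · exact (h y hpos).le
  set H : ℕ → ℝ := fun n => ∑ f : Fin n → S, G.energy p (List.ofFn f) with hH
  have hstep : ∀ n, H n + ε ≤ H (n + L) := fun n => calc
    H n + ε = H n + ∑ f : Fin n → S, ε * G.PrW p (List.ofFn f) := by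
      rw [← mul_sum, G.sum_PrW_ofFn hp1, mul_one]
    _ ≤ H n + ∑ f : Fin n → S, G.energyGain p L (List.ofFn f) := by
      gcongr with f
      exact hgain _
    _ = H (n + L) := by
      simp only [hH, energyGain, sum_sub_distrib, sum_ofFn_append]
      ring
  have hlin : ∀ k : ℕ, k * ε ≤ H (k * L) := fun k => by
    induction k with
    | zero => simpa [hH] using G.energy_nonneg hp []
    | succ k ih =>
      rw [Nat.succ_mul]
      push_cast
      linarith [hstep (k * L)]
  obtain ⟨k, hk⟩ := exists_nat_gt ε⁻¹
  have hle : H (k * L) ≤ 1 :=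
    (sum_le_sum fun _ _ => G.energy_le_PrW hp _).trans (G.sum_PrW_ofFn hp1 _).le
  have hkε := mul_lt_mul_of_pos_right hk hε
  rw [inv_mul_cancel₀ hε.ne'] at hkε
  linarith [hlin k]

theorem energyGain_eq_sum (p : Q → ℝ) (L : ℕ) (y : List S) :
    G.energyGain p L y = ∑ q, (∑ h : Fin L → S,
      (p q * G.πs q (y ++ List.ofFn h)) ^ 2 / G.PrW p (y ++ List.ofFn h) -
        (p q * G.πs q y) ^ 2 / G.PrW p y) := by
  simp only [energyGain, energy, sum_sub_distrib]
  rw [sum_comm]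

theorem sq_mul_sum_abs_le (hp : ∀ q, 0 ≤ p q) (L : ℕ) {y : List S} (hy : 0 < G.PrW p y)
    (q : Q) :
    (p q * G.πs q y * ∑ h : Fin L → S,
        |G.πs (G.δs q y) (List.ofFn h) * G.PrW p y - G.PrW p (y ++ List.ofFn h)|) ^ 2 ≤
      G.PrW p y ^ 3 * (∑ h : Fin L → S,
        (p q * G.πs q (y ++ List.ofFn h)) ^ 2 / G.PrW p (y ++ List.ofFn h) -
          (p q * G.πs q y) ^ 2 / G.PrW p y) := by
  have hw := mul_nonneg (hp q) (G.πs_nonneg q y)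
  have key := sq_sum_abs_mul_sub_mul_le (fun h : Fin L → S => p q * G.πs q (y ++ List.ofFn h))
    (fun h => G.PrW p (y ++ List.ofFn h)) (fun h => G.PrW_nonneg hp _)
    (fun h h0 => le_antisymm (h0 ▸ G.mul_πs_le_PrW hp _ q)
      (mul_nonneg (hp q) (G.πs_nonneg q _)))
    (by rwa [G.sum_PrW_append_ofFn])
  simp only [G.sum_PrW_append_ofFn, ← mul_sum, G.sum_πs_append_ofFn] at key
  refine le_of_eq_of_le ?_ key
  rw [mul_sum]
  refine congrArg (· ^ 2) (sum_congr rfl fun h _ => ?_)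
  rw [πs_append, ← abs_of_nonneg hw, ← abs_mul, abs_of_nonneg hw]
  ring_nf

theorem sum_abs_sub_le_of_energyGain_le (hp : ∀ q, 0 ≤ p q) {L : ℕ} {y : List S}
    (hy : 0 < G.PrW p y) {η κ : ℝ} (hη : 0 < η) (hκ : 0 ≤ κ)
    (hgain : G.energyGain p L y ≤ (η * κ) ^ 2 * G.PrW p y) {q : Q}
    (hq : η * G.PrW p y ≤ p q * G.πs q y) :
    ∑ h : Fin L → S, |G.πs (G.δs q y) (List.ofFn h) * G.PrW p y - G.PrW p (y ++ List.ofFn h)| ≤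
      κ * G.PrW p y := by
  set N := G.PrW p y
  set T := ∑ h : Fin L → S,
    |G.πs (G.δs q y) (List.ofFn h) * N - G.PrW p (y ++ List.ofFn h)|
  have hT : 0 ≤ T := sum_nonneg fun _ _ => abs_nonneg _
  have hdefect : ∀ q', 0 ≤ ∑ h : Fin L → S,
      (p q' * G.πs q' (y ++ List.ofFn h)) ^ 2 / G.PrW p (y ++ List.ofFn h) -
        (p q' * G.πs q' y) ^ 2 / N := fun q' =>
    (mul_nonneg_iff_of_pos_left (pow_pos hy 3)).1
      ((sq_nonneg _).trans (G.sq_mul_sum_abs_le hp L hy q'))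
  have hsq : (p q * G.πs q y * T) ^ 2 ≤ (η * κ * N ^ 2) ^ 2 := calc
    _ ≤ N ^ 3 * G.energyGain p L y := by
      refine (G.sq_mul_sum_abs_le hp L hy q).trans (mul_le_mul_of_nonneg_left ?_ (by positivity))
      rw [energyGain_eq_sum]
      exact single_le_sum (fun q' _ => hdefect q') (mem_univ q)
    _ ≤ N ^ 3 * ((η * κ) ^ 2 * N) := mul_le_mul_of_nonneg_left hgain (by positivity)
    _ = (η * κ * N ^ 2) ^ 2 := by ring
  have hwT := (pow_le_pow_iff_left₀ (mul_nonneg (mul_nonneg (hp q) (G.πs_nonneg q y)) hT)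
    (by positivity) two_ne_zero).1 hsq
  have hηN : 0 < η * N := mul_pos hη hy
  refine le_of_mul_le_mul_left ?_ hηN
  nlinarith [mul_le_mul_of_nonneg_right hq hT]

theorem δs_eq_of_energyGain_le (hp : ∀ q, 0 ≤ p q) {L : ℕ} {γ : ℝ} (hγ : 0 < γ)
    (hsep : ∀ r r', r ≠ r' → γ ≤ G.l1Dist L r r') {y : List S} (hy : 0 < G.PrW p y) {η : ℝ}
    (hη : 0 < η) (hgain : G.energyGain p L y ≤ (η * (γ / 4)) ^ 2 * G.PrW p y) {q q' : Q}
    (hq : η * G.PrW p y ≤ p q * G.πs q y) (hq' : η * G.PrW p y ≤ p q' * G.πs q' y) :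
    G.δs q y = G.δs q' y := by
  by_contra hne
  set N := G.PrW p y
  have h₁ := G.sum_abs_sub_le_of_energyGain_le hp hy hη (by positivity) hgain hq
  have h₂ := G.sum_abs_sub_le_of_energyGain_le hp hy hη (by positivity) hgain hq'
  have hclose : G.l1Dist L (G.δs q y) (G.δs q' y) * N ≤ γ / 2 * N := by
    rw [l1Dist, sum_mul]
    calc _ ≤ ∑ h : Fin L → S,
          (|G.πs (G.δs q y) (List.ofFn h) * N - G.PrW p (y ++ List.ofFn h)| +
            |G.πs (G.δs q' y) (List.ofFn h) * N - G.PrW p (y ++ List.ofFn h)|) := by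
          refine sum_le_sum fun h _ => ?_
          rw [← abs_of_pos hy, ← abs_mul, sub_mul, abs_of_pos hy]
          have := abs_sub_le (G.πs (G.δs q y) (List.ofFn h) * N) (G.PrW p (y ++ List.ofFn h))
            (G.πs (G.δs q' y) (List.ofFn h) * N)
          rwa [abs_sub_comm (G.PrW p _)] at this
      _ ≤ γ / 2 * N := by
          rw [sum_add_distrib]
          linarith
  nlinarith [hsep _ _ hne]

end Prior

section Synchronization

variable {Q S : Type*} [Fintype S] [Fintype Q] [DecidableEq Q] {G : PFSA Q S} {p : Q → ℝ}

theorem Distinguishable.exists_wvec_ge (hG : G.Distinguishable) (hp : ∀ q, 0 ≤ p q)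
    (hp1 : ∑ q, p q = 1) {a : ℝ} (ha : 0 < a) :
    ∃ y r, 0 < G.PrW p y ∧ (1 - a) * G.PrW p y ≤ G.wvec p y r := by
  obtain ⟨L, γ, hγ, hsep⟩ := hG.exists_le_l1Dist
  have hQ : Nonempty Q := by
    by_contra! h
    simp at hp1
  set η := a / Fintype.card Q
  have hη : 0 < η := by positivity
  obtain ⟨y, hy, hgain⟩ := G.exists_energyGain_le hp hp1 L (ε := (η * (γ / 4)) ^ 2)
    (by positivity)
  obtain ⟨q₀, -, hq₀⟩ := exists_max_image univ (fun q => p q * G.πs q y) univ_nonempty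
  refine ⟨y, G.δs q₀ y, hy, ?_⟩
  have hlight : ∀ q, G.δs q y ≠ G.δs q₀ y → p q * G.πs q y < η * G.PrW p y := by
    intro q hq
    by_contra! hheavy
    exact hq (G.δs_eq_of_energyGain_le hp hγ hsep hy hη hgain hheavy
      (hheavy.trans (hq₀ q (mem_univ q))))
  have hrest : G.PrW p y - G.wvec p y (G.δs q₀ y) ≤ a * G.PrW p y := by
    rw [PrW_sub_wvec]
    calc _ ≤ ∑ q with G.δs q y ≠ G.δs q₀ y, η * G.PrW p y :=
          sum_le_sum fun q hq => (hlight q (mem_filter.1 hq).2).le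
      _ ≤ ∑ _q : Q, η * G.PrW p y :=
          sum_le_sum_of_subset_of_nonneg (filter_subset _ _) fun _ _ _ => by positivity
      _ = a * G.PrW p y := by
          simp only [sum_const, card_univ, nsmul_eq_mul, η]
          field_simp
  linarith

theorem wvec_mul_πs_le_wvec_append (hp : ∀ q, 0 ≤ p q) {r qt : Q} {z : List S}
    (hz : G.δs r z = qt) (y : List S) :
    G.wvec p y r * G.πs r z ≤ G.wvec p (y ++ z) qt := by
  rw [wvec_apply, wvec_apply, sum_mul]
  calc _ = ∑ q with G.δs q y = r, p q * G.πs q (y ++ z) :=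
        sum_congr rfl fun q hq => by rw [πs_append, (mem_filter.1 hq).2, mul_assoc]
    _ ≤ _ := by
        refine sum_le_sum_of_subset_of_nonneg (fun q hq => ?_)
          fun q _ _ => mul_nonneg (hp q) (G.πs_nonneg q _)
        simp only [mem_filter, mem_univ, true_and] at hq ⊢
        rw [δs_append, hq, hz]

theorem PrW_sub_wvec_append_le (hp : ∀ q, 0 ≤ p q) {r qt : Q} {z : List S}
    (hz : G.δs r z = qt) (y : List S) :
    G.PrW p (y ++ z) - G.wvec p (y ++ z) qt ≤ G.PrW p y - G.wvec p y r := by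
  rw [PrW_sub_wvec, PrW_sub_wvec]
  calc _ ≤ ∑ q with G.δs q (y ++ z) ≠ qt, p q * G.πs q y := by
        refine sum_le_sum fun q _ => ?_
        rw [πs_append, ← mul_assoc]
        exact mul_le_of_le_one_right (mul_nonneg (hp q) (G.πs_nonneg q y)) (G.πs_le_one _ _)
    _ ≤ _ := by
        refine sum_le_sum_of_subset_of_nonneg (fun q hq => ?_)
          fun q _ _ => mul_nonneg (hp q) (G.πs_nonneg q _)
        simp only [mem_filter, mem_univ, true_and] at hq ⊢
        rintro hr
        exact hq (by rw [δs_append, hr, hz])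

theorem exists_wdist_ge (hSC : G.StronglyConnected) (hDist : G.Distinguishable)
    (hp : ∀ q, 0 ≤ p q) (hp1 : ∑ q, p q = 1) {c : ℝ} (hc : 0 < c) (qt : Q) :
    ∃ x, 0 < G.PrW p x ∧ 1 - c ≤ G.wdist p x qt := by
  choose z hz hzpos using fun r => hSC r qt
  obtain ⟨ρ, hρ, hρz⟩ := exists_pos_forall_le_of_finite hzpos
  have ha₁ := min_le_left (1 / 2 : ℝ) (c * ρ / 2)
  have ha₂ := min_le_right (1 / 2 : ℝ) (c * ρ / 2)
  obtain ⟨y, r, hy, hyr⟩ := hDist.exists_wvec_ge hp hp1 (a := min (1 / 2) (c * ρ / 2))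
    (by positivity)
  set a := min (1 / 2 : ℝ) (c * ρ / 2)
  have hA : ρ * G.PrW p y / 2 ≤ G.wvec p (y ++ z r) qt := calc
    _ ≤ (1 - a) * G.PrW p y * ρ := by
      nlinarith [mul_nonneg (sub_nonneg.2 ha₁) (mul_pos hy hρ).le]
    _ ≤ G.wvec p y r * G.πs r (z r) := mul_le_mul hyr (hρz r) hρ.le (G.wvec_nonneg hp _ _)
    _ ≤ _ := wvec_mul_πs_le_wvec_append hp (hz r) y
  have hrest : G.PrW p (y ++ z r) - G.wvec p (y ++ z r) qt ≤ a * G.PrW p y :=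
    (PrW_sub_wvec_append_le hp (hz r) y).trans (by linarith)
  have hT := G.wvec_le_PrW hp (y ++ z r) qt
  have hpos : 0 < G.PrW p (y ++ z r) := by nlinarith
  refine ⟨y ++ z r, hpos, ?_⟩
  rw [wdist, le_div_iff₀ hpos]
  nlinarith [mul_le_mul_of_nonneg_left hA hc.le, mul_le_mul_of_nonneg_left hT hc.le]

theorem π_mem_closure (hSC : G.StronglyConnected) (hDist : G.Distinguishable)
    (hp : ∀ q, 0 ≤ p q) (hp1 : ∑ q, p q = 1) (q : Q) :
    G.π q ∈ closure {u : S → ℝ | ∃ x, 0 < G.PrW p x ∧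
      u = fun σ => ∑ q', G.wdist p x q' * G.π q' σ} := by
  refine Metric.mem_closure_iff.2 fun ε hε => ?_
  obtain ⟨x, hx, hqx⟩ := exists_wdist_ge hSC hDist hp hp1 (half_pos hε) q
  refine ⟨_, ⟨x, hx, rfl⟩, ((dist_pi_le_iff (half_pos hε).le).2 fun σ => ?_).trans_lt
    (half_lt_self hε)⟩
  rw [Real.dist_eq]
  exact (abs_sub_sum_mul_le (G.wdist_nonneg hp x) (G.sum_wdist hx) (fun q' => G.π_nonneg q' σ)
    (fun q' => G.π_le_one q' σ) q).trans (by linarith)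

end Synchronization

end PFSA

theorem stmt_9_general {Q S : Type*} [Fintype S] [Fintype Q] [DecidableEq Q]
    (G : PFSA Q S)
    (hSC : G.StronglyConnected) (hDist : G.Distinguishable)
    (℘ : Q → ℝ) (h℘ : G.IsStationary ℘) :
    closure (convexHull ℝ {p : S → ℝ | ∃ x : List S, 0 < G.PrW ℘ x ∧
        p = fun σ => ∑ q, G.wdist ℘ x q * G.π q σ}) =
      convexHull ℝ {p : S → ℝ | ∃ q : Q, p = G.π q} ∧
    ∀ u ∈ Set.extremePoints ℝ (closure (convexHull ℝ {p : S → ℝ | ∃ x : List S,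
        0 < G.PrW ℘ x ∧ p = fun σ => ∑ q, G.wdist ℘ x q * G.π q σ})),
      ∃ q : Q, u = G.π q := by
  obtain ⟨h℘0, h℘1, -⟩ := h℘
  have hrows : {p : S → ℝ | ∃ q : Q, p = G.π q} = Set.range G.π := by
    ext
    simp [eq_comm]
  have hhull : closure (convexHull ℝ {p : S → ℝ | ∃ x : List S, 0 < G.PrW ℘ x ∧
      p = fun σ => ∑ q, G.wdist ℘ x q * G.π q σ}) = convexHull ℝ (Set.range G.π) := by
    refine (closure_minimal (convexHull_min ?_ (convex_convexHull ℝ _))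
      ((Set.finite_range _).isClosed_convexHull (𝕜 := ℝ))).antisymm
      (convexHull_min ?_ (convex_convexHull ℝ _).closure)
    · rintro _ ⟨x, hx, rfl⟩
      exact sum_mul_mem_convexHull_range (G.wdist_nonneg h℘0 x) (G.sum_wdist hx) G.π
    · rintro _ ⟨q, rfl⟩
      exact closure_mono (subset_convexHull ℝ _) (PFSA.π_mem_closure hSC hDist h℘0 h℘1 q)
  refine ⟨hrows ▸ hhull, fun u hu => ?_⟩
  rw [hhull] at hu
  exact (extremePoints_convexHull_subset hu).imp fun q hq => hq.symm

/-- Limiting Geometry: the closure of the convex hull of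
`D_∞ = {℘_x Π̃ : Pr(x) > 0}` equals the convex hull of `{π̃(q,·) : q ∈ Q}`;
in particular every extreme point of the closed convex hull of `D_∞` is some `π̃(q,·)`. -/
theorem stmt_9 {Q S : Type*} [Fintype S] [Fintype Q] [DecidableEq Q]
    (hS : 2 ≤ Fintype.card S) (G : PFSA Q S)
    (hSC : G.StronglyConnected) (hDist : G.Distinguishable)
    (℘ : Q → ℝ) (h℘ : G.IsStationary ℘) :
    closure (convexHull ℝ {p : S → ℝ | ∃ x : List S, 0 < G.PrW ℘ x ∧
        p = fun σ => ∑ q, G.wdist ℘ x q * G.π q σ}) =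
      convexHull ℝ {p : S → ℝ | ∃ q : Q, p = G.π q} ∧
    ∀ u ∈ Set.extremePoints ℝ (closure (convexHull ℝ {p : S → ℝ | ∃ x : List S,
        0 < G.PrW ℘ x ∧ p = fun σ => ∑ q, G.wdist ℘ x q * G.π q σ})),
      ∃ q : Q, u = G.π q :=
  stmt_9_general G hSC hDist ℘ h℘
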